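/- Let m, k, l, N be positive integers with m > 1 and 1 ≤ l < k, and let c ∈ ℂ with c ≠ 0. Then for every z ∈ ℂ, W̄_N^{[m,k,l]}(z; c^m) = c^Γ · W_N^{[m,k,l]}(z/c), where Γ = N((k−1)(N−1)+2l)/2. In particular, every monomial a^i z^j occurring in W̄_N^{[m,k,l]}(z;a) satisfies im + j = Γ. -/

import Mathlib

/-! Give `a` weight `m` and `z` weight `1`. Then `S_j^{[m]}(z;a)` is weighted homogeneous of
weight `j`, so the `(i, j)` entry of the determinant has weight `(k j + l) - i`, and every term
of the Leibniz expansion has weight `∑_j (k j + l) - ∑_i i = Γ`. Substituting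
`(z, a) ↦ (c z, c^m a)` multiplies a weighted homogeneous polynomial of weight `Γ` by `c^Γ`. -/

open scoped BigOperators

/-- `Sfun m j z a = S_j^{[m]}(z;a) = ∑_{i=0}^{⌊j/m⌋} a^i z^{j-im}/(i!(j-im)!)` for `j ≥ 0`. -/
noncomputable def Sfun (m j : ℕ) (z a : ℂ) : ℂ :=
  ∑ i ∈ Finset.range (j / m + 1),
    a ^ i * z ^ (j - i * m) / ((Nat.factorial i : ℂ) * (Nat.factorial (j - i * m) : ℂ))

/-- `SfunInt` extends `Sfun` by `0` to negative indices `j`. -/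
noncomputable def SfunInt (m : ℕ) (j : ℤ) (z a : ℂ) : ℂ :=
  if 0 ≤ j then Sfun m j.toNat z a else 0

/-- The normalizing constant `c_N^{[m,k,l]} = k^{-N(N-1)/2} ∏_{i=1}^{N} (k(i-1)+l)!/(i-1)!`. -/
noncomputable def cConst (k l N : ℕ) : ℂ :=
  ((k : ℂ) ^ (N * (N - 1) / 2))⁻¹ *
    ∏ i ∈ Finset.range N, ((Nat.factorial (k * i + l) : ℂ) / ((Nat.factorial i : ℕ) : ℂ))

/-- `W̄_N^{[m,k,l]}(z;a) = c_N^{[m,k,l]} · det_{1≤i,j≤N}( S^{[m]}_{k(j-1)+l-i+1}(z;a) )`. -/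
noncomputable def WbarFun (m k l N : ℕ) (z a : ℂ) : ℂ :=
  cConst k l N *
    Matrix.det (Matrix.of fun i j : Fin N =>
      SfunInt m (((k * (j : ℕ) + l : ℕ) : ℤ) - ((i : ℕ) : ℤ)) z a)

/-- `W_N^{[m,k,l]}(z) = W̄_N^{[m,k,l]}(z;1)`. -/
noncomputable def WFun (m k l N : ℕ) (z : ℂ) : ℂ := WbarFun m k l N z 1

/-- `S_j^{[m]}(z;a)` as a bivariate polynomial: an element of `(ℂ[z])[a]`, the outer
variable being `a` and the inner one `z`; extended by `0` to negative `j`. -/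
noncomputable def SbivPoly (m : ℕ) (j : ℤ) : Polynomial (Polynomial ℂ) :=
  if 0 ≤ j then
    ∑ i ∈ Finset.range (j.toNat / m + 1),
      Polynomial.C
        (Polynomial.C (((Nat.factorial i * Nat.factorial (j.toNat - i * m) : ℕ) : ℂ))⁻¹ *
          Polynomial.X ^ (j.toNat - i * m)) *
        Polynomial.X ^ i
  else 0

/-- `W̄_N^{[m,k,l]}(z;a)` as a bivariate polynomial in `(ℂ[z])[a]`. -/
noncomputable def WbarPoly (m k l N : ℕ) : Polynomial (Polynomial ℂ) :=
  Polynomial.C (Polynomial.C (cConst k l N)) *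
    Matrix.det (Matrix.of fun i j : Fin N =>
      SbivPoly m (((k * (j : ℕ) + l : ℕ) : ℤ) - ((i : ℕ) : ℤ)))

open Polynomial

def IsWeightedHomogeneousBiv {R : Type*} [Semiring R] (m : ℕ) (w : ℤ) (P : R[X][X]) : Prop :=
  ∀ i j : ℕ, (P.coeff i).coeff j ≠ 0 → (i * m + j : ℤ) = w

namespace IsWeightedHomogeneousBiv

variable {R : Type*} {m : ℕ}

section Semiring

variable [Semiring R]

theorem const (r : R) : IsWeightedHomogeneousBiv m 0 (CC r) := by
  intro i j h
  have hi : i = 0 := by by_contra hi; simp [coeff_C, hi] at h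
  have hj : j = 0 := by by_contra hj; simp [coeff_C, hi, hj] at h
  simp [hi, hj]

theorem C_mul_X_pow (r : R) (i e : ℕ) :
    IsWeightedHomogeneousBiv m (i * m + e) (C (C r * X ^ e) * X ^ i) := by
  intro a b h
  simp only [coeff_C_mul_X_pow] at h
  split_ifs at h <;> simp_all

theorem mul {w v : ℤ} {P Q : R[X][X]} (hP : IsWeightedHomogeneousBiv m w P)
    (hQ : IsWeightedHomogeneousBiv m v Q) : IsWeightedHomogeneousBiv m (w + v) (P * Q) := by
  intro i j h
  rw [coeff_mul, finsetSum_coeff] at h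
  obtain ⟨⟨i₁, i₂⟩, hi, h⟩ := Finset.exists_ne_zero_of_sum_ne_zero h
  rw [coeff_mul] at h
  obtain ⟨⟨j₁, j₂⟩, hj, h⟩ := Finset.exists_ne_zero_of_sum_ne_zero h
  rw [Finset.HasAntidiagonal.mem_antidiagonal] at hi hj
  rw [← hP i₁ j₁ (left_ne_zero_of_mul h), ← hQ i₂ j₂ (right_ne_zero_of_mul h), ← hi,
    ← hj]
  push_cast
  ring

theorem sum {ι : Type*} {s : Finset ι} {w : ℤ} {P : ι → R[X][X]}
    (hP : ∀ t ∈ s, IsWeightedHomogeneousBiv m w (P t)) :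
    IsWeightedHomogeneousBiv m w (∑ t ∈ s, P t) := by
  intro i j h
  rw [finsetSum_coeff, finsetSum_coeff] at h
  obtain ⟨t, ht, h⟩ := Finset.exists_ne_zero_of_sum_ne_zero h
  exact hP t ht i j h

end Semiring

theorem neg [Ring R] {w : ℤ} {P : R[X][X]} (hP : IsWeightedHomogeneousBiv m w P) :
    IsWeightedHomogeneousBiv m w (-P) :=
  fun i j h => hP i j (by simpa using h)

section CommSemiring

variable [CommSemiring R]

theorem prod {ι : Type*} {s : Finset ι} {w : ι → ℤ} {P : ι → R[X][X]}
    (hP : ∀ t ∈ s, IsWeightedHomogeneousBiv m (w t) (P t)) :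
    IsWeightedHomogeneousBiv m (∑ t ∈ s, w t) (∏ t ∈ s, P t) := by
  induction s using Finset.cons_induction with
  | empty =>
    simpa only [Finset.sum_empty, Finset.prod_empty, CC, C_1] using const (R := R) (m := m) 1
  | cons a s ha ih =>
    rw [Finset.sum_cons, Finset.prod_cons]
    exact (hP a (s.mem_cons_self a)).mul (ih fun t ht => hP t (Finset.mem_cons_of_mem ht))

theorem evalEval_mul_pow {w : ℕ} {P : R[X][X]} (hP : IsWeightedHomogeneousBiv m w P)
    (c x y : R) : P.evalEval (c * x) (c ^ m * y) = c ^ w * P.evalEval x y := by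
  simp only [evalEval, eval_eq_sum (p := P), sum_def, eval_finsetSum, eval_mul, eval_pow, eval_C,
    eval_eq_sum (p := P.coeff _), Finset.mul_sum, Finset.sum_mul]
  refine Finset.sum_congr rfl fun i _ => Finset.sum_congr rfl fun j hj => ?_
  rw [← show i * m + j = w by exact_mod_cast hP i j (mem_support_iff.mp hj)]
  ring

end CommSemiring

theorem det [CommRing R] {n : Type*} [Fintype n] [DecidableEq n] {M : Matrix n n R[X][X]}
    (f g : n → ℤ) (hM : ∀ i j, IsWeightedHomogeneousBiv m (f j - g i) (M i j)) :
    IsWeightedHomogeneousBiv m (∑ j, f j - ∑ i, g i) M.det := by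
  rw [Matrix.det_apply]
  refine sum fun σ _ => ?_
  have hprod : IsWeightedHomogeneousBiv m (∑ j, (f j - g (σ j))) (∏ j, M (σ j) j) :=
    prod fun j _ => hM _ _
  rw [Finset.sum_sub_distrib, Equiv.sum_comp σ g] at hprod
  rcases Int.units_eq_one_or (Equiv.Perm.sign σ) with h | h <;> simp [h, hprod, hprod.neg]

end IsWeightedHomogeneousBiv

theorem isWeightedHomogeneousBiv_SbivPoly (m : ℕ) (j : ℤ) :
    IsWeightedHomogeneousBiv m j (SbivPoly m j) := by
  unfold SbivPoly
  split_ifs with hj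
  · refine IsWeightedHomogeneousBiv.sum fun i hi => ?_
    have him : i * m ≤ j.toNat :=
      (Nat.mul_le_mul_right m (Nat.lt_succ_iff.mp (Finset.mem_range.mp hi))).trans
        (Nat.div_mul_le_self _ m)
    convert IsWeightedHomogeneousBiv.C_mul_X_pow _ i (j.toNat - i * m) using 1
    omega
  · intro i j h
    simp at h

theorem evalEval_SbivPoly (m : ℕ) (j : ℤ) (z a : ℂ) :
    (SbivPoly m j).evalEval z a = SfunInt m j z a := by
  unfold SbivPoly SfunInt Sfun
  split_ifs
  · rw [evalEval_finsetSum]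
    refine Finset.sum_congr rfl fun i _ => ?_
    simp [evalEval_C, div_eq_mul_inv]
    ring
  · simp

theorem evalEval_WbarPoly (m k l N : ℕ) (z a : ℂ) :
    (WbarPoly m k l N).evalEval z a = WbarFun m k l N z a := by
  rw [WbarPoly, WbarFun, ← coe_evalEvalRingHom, map_mul, RingHom.map_det]
  congr 2
  · simp
  · ext i j
    exact evalEval_SbivPoly m _ z a

theorem sum_range_mul_add (k l N : ℕ) (hk : 1 ≤ k) :
    ∑ j ∈ Finset.range N, (k * j + l) =
      N * ((k - 1) * (N - 1) + 2 * l) / 2 + ∑ i ∈ Finset.range N, i := by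
  obtain ⟨k, rfl⟩ := Nat.exists_eq_add_of_le' hk
  have hdiv : N * (k * (N - 1) + 2 * l) / 2 = k * ∑ i ∈ Finset.range N, i + N * l := by
    apply Nat.div_eq_of_eq_mul_left two_pos
    rw [add_mul, mul_assoc, Finset.sum_range_id_mul_two]
    ring
  rw [Finset.sum_add_distrib, ← Finset.mul_sum, Finset.sum_const, Finset.card_range, smul_eq_mul,
    Nat.add_sub_cancel, hdiv]
  ring

theorem isWeightedHomogeneousBiv_WbarPoly (m k l N : ℕ) (hk : 1 ≤ k) :
    IsWeightedHomogeneousBiv m ((N * ((k - 1) * (N - 1) + 2 * l) / 2 : ℕ) : ℤ)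
      (WbarPoly m k l N) := by
  have hdet := IsWeightedHomogeneousBiv.det
    (M := Matrix.of fun i j : Fin N =>
      SbivPoly m (((k * (j : ℕ) + l : ℕ) : ℤ) - ((i : ℕ) : ℤ)))
    (fun j => ((k * (j : ℕ) + l : ℕ) : ℤ)) (fun i => ((i : ℕ) : ℤ))
    fun i j => isWeightedHomogeneousBiv_SbivPoly m _
  have hw : ∑ j : Fin N, ((k * (j : ℕ) + l : ℕ) : ℤ) - ∑ i : Fin N, ((i : ℕ) : ℤ) =
      ((N * ((k - 1) * (N - 1) + 2 * l) / 2 : ℕ) : ℤ) := by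
    rw [Fin.sum_univ_eq_sum_range (fun j => ((k * j + l : ℕ) : ℤ)),
      Fin.sum_univ_eq_sum_range (fun i => (i : ℤ)), ← Nat.cast_sum, ← Nat.cast_sum,
      sum_range_mul_add k l N hk]
    push_cast
    ring
  rw [WbarPoly, ← hw, ← zero_add (_ - _)]
  exact (IsWeightedHomogeneousBiv.const _).mul hdet

theorem Wbar_scaling_and_weight
    (m k l N : ℕ) (hlk : l < k)
    (c : ℂ) (hc : c ≠ 0) :
    (∀ z : ℂ, WbarFun m k l N z (c ^ m) =
        c ^ (N * ((k - 1) * (N - 1) + 2 * l) / 2) * WFun m k l N (z / c)) ∧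
      (∀ i j : ℕ, ((WbarPoly m k l N).coeff i).coeff j ≠ 0 →
        i * m + j = N * ((k - 1) * (N - 1) + 2 * l) / 2) := by
  have hW := isWeightedHomogeneousBiv_WbarPoly m k l N (by omega)
  refine ⟨fun z => ?_, fun i j h => by exact_mod_cast hW i j h⟩
  rw [WFun, ← evalEval_WbarPoly, ← evalEval_WbarPoly, ← hW.evalEval_mul_pow,
    mul_div_cancel₀ z hc, mul_one]
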